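/- Let Δ be the root system of a complex simple Lie algebra with simple roots α₁, …, α_ℓ, highest root θ, Weyl group W, and let Σ be a nonempty subset of the simple roots. Suppose σ = s_i ∘ s_j with i ≠ j satisfies Δ_σ ⊆ Δ⁺_Σ (i.e. σ ∈ W²_Σ). Then: (a) Δ_σ = {α_i, s_i(α_j)}; (b) α_i ∈ Σ; and (c) −ht_Σ(σ(θ)) + ht_Σ(α_i) + ht_Σ(s_i(α_j)) = −ht_Σ(θ) + ⟨θ, α_i⟩ + 1 + (⟨θ, α_j⟩ + 1)·ht_Σ(s_i(α_j)). -/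

import Mathlib

open scoped RealInnerProductSpace BigOperators Classical

/-- A reduced crystallographic root system in a real inner product space,
together with a chosen base of simple roots and the coordinates of each
root with respect to the base. -/
structure RootSystemBase (V : Type*) [NormedAddCommGroup V] [InnerProductSpace ℝ V] where
  /-- the set of roots -/
  Δ : Finset V
  /-- the set of simple roots (the base) -/
  Δ0 : Finset V
  base_sub : Δ0 ⊆ Δ
  ne_zero : ∀ β ∈ Δ, β ≠ (0 : V)
  indep : LinearIndependent ℝ (fun a : ↥Δ0 => (a : V))
  neg_mem : ∀ β ∈ Δ, -β ∈ Δ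
  /-- `coeff β α` is the coefficient `n_α` of the simple root `α` in `β = ∑ n_α • α` -/
  coeff : V → V → ℤ
  coeff_spec : ∀ β ∈ Δ, β = ∑ α ∈ Δ0, (coeff β α : ℝ) • α
  coeff_sign : ∀ β ∈ Δ, (∀ α ∈ Δ0, 0 ≤ coeff β α) ∨ (∀ α ∈ Δ0, coeff β α ≤ 0)
  crystal : ∀ α ∈ Δ, ∀ β ∈ Δ, ∃ k : ℤ, 2 * ⟪β, α⟫ / ⟪α, α⟫ = (k : ℝ)
  reflect_mem : ∀ α ∈ Δ, ∀ β ∈ Δ, β - (2 * ⟪β, α⟫ / ⟪α, α⟫) • α ∈ Δ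
  reduced : ∀ α ∈ Δ, (2 : ℝ) • α ∉ Δ

namespace RootSystemBase

variable {V : Type*} [NormedAddCommGroup V] [InnerProductSpace ℝ V]

variable (R : RootSystemBase V)

/-- The height `ht_Σ(β)` of a root `β` relative to a subset `Sg` of the simple roots. -/
def ht (Sg : Finset V) (β : V) : ℤ := ∑ α ∈ Sg, R.coeff β α

/-- positive roots -/
def IsPos (β : V) : Prop := β ∈ R.Δ ∧ ∀ α ∈ R.Δ0, 0 ≤ R.coeff β α

/-- negative roots -/
def IsNeg (β : V) : Prop := β ∈ R.Δ ∧ ∀ α ∈ R.Δ0, R.coeff β α ≤ 0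

/-- Irreducibility of the root system (the Dynkin diagram is connected); this is
equivalent to the corresponding complex Lie algebra being simple. -/
def Irred : Prop :=
  ¬ ∃ S : Finset V, S ⊆ R.Δ0 ∧ S.Nonempty ∧ S ≠ R.Δ0 ∧
      ∀ a ∈ S, ∀ b ∈ R.Δ0, b ∉ S → ⟪a, b⟫ = 0

/-- Adjacency of two (simple) roots in the Dynkin diagram. -/
def Adj (a b : V) : Prop := a ≠ b ∧ ⟪a, b⟫ ≠ 0

end RootSystemBase

namespace RootSystemBase

variable {V : Type*} [NormedAddCommGroup V] [InnerProductSpace ℝ V]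

/-- The Cartan pairing `⟨a, b⟩ = 2(a,b)/(b,b)`. -/
noncomputable def cInt (a b : V) : ℝ := 2 * ⟪a, b⟫ / ⟪b, b⟫

end RootSystemBase

namespace RootSystemBase

variable {V : Type*} [NormedAddCommGroup V] [InnerProductSpace ℝ V]

/-- The reflection `s_a` in the root `a`:  `s_a(v) = v - ⟨v, a⟩ a`. -/
noncomputable def refl (a v : V) : V := v - cInt v a • a

variable (R : RootSystemBase V)

/-- `θ` is the highest root. -/
def IsHighest (θ : V) : Prop :=
  θ ∈ R.Δ ∧ ∀ β ∈ R.Δ, ∀ α ∈ R.Δ0, R.coeff β α ≤ R.coeff θ α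

/-- `Δ_σ = σ(Δ⁻) ∩ Δ⁺` for the length-two Weyl group element `σ = s_a ∘ s_b`;
equivalently the positive roots mapped to negative roots by `σ⁻¹ = s_b ∘ s_a`. -/
noncomputable def Dsig (a b : V) : Finset V :=
  R.Δ.filter (fun β => R.IsPos β ∧ R.IsNeg (refl b (refl a β)))

/-- The grading determined by `Sg` is *non-rigid*:  there is `σ = s_a ∘ s_b ∈ W²_Σ`
(`a ≠ b` simple, `Δ_σ ⊆ Δ⁺_Σ`, `|Δ_σ| = 2`) whose harmonic representative has
positive homogeneity weight, i.e.
`⟨θ, a⟩ + (⟨θ, b⟩ + 1)·ht_Σ(s_a(b)) ≥ ht_Σ(θ)`.  By Kostant's theorem this is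
equivalent to the nonvanishing of `H²(𝔤₋, 𝔤)` in some positive homogeneity weight. -/
noncomputable def NonRigid (Sg : Finset V) (θ : V) : Prop :=
  ∃ a ∈ R.Δ0, ∃ b ∈ R.Δ0, a ≠ b ∧
    (R.Dsig a b).card = 2 ∧ (∀ β ∈ R.Dsig a b, 0 < R.ht Sg β) ∧
    (R.ht Sg θ : ℝ) ≤ cInt θ a + (cInt θ b + 1) * (R.ht Sg (refl a b) : ℝ)

end RootSystemBase

/-!
Every positive root other than the simple root `a` stays positive under `s_a`: a positive root
sent to a negative one is a multiple of `a`, hence `a` itself since the system is reduced.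
So `s_b ∘ s_a` makes a positive root `β` negative only if `β = a` or `s_a β = b`, which gives
`Δ_σ = {a, s_a b}`; then `ht_Σ a > 0` forces `a ∈ Σ`. The height formula is bookkeeping with
`ht_Σ (s_α β) = ht_Σ β - ⟨β, α⟩ ht_Σ α`, which holds because `ht_Σ` is additive.
-/

namespace RootSystemBase

variable {V : Type*} [NormedAddCommGroup V] [InnerProductSpace ℝ V]

lemma cInt_sub_smul (v w u : V) (t : ℝ) : cInt (v - t • w) u = cInt v u - t * cInt w u := by
  unfold cInt
  rw [inner_sub_left, real_inner_smul_left]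
  ring

lemma cInt_neg (v u : V) : cInt (-v) u = -cInt v u := by
  unfold cInt
  rw [inner_neg_left]
  ring

lemma cInt_self {a : V} (ha : a ≠ 0) : cInt a a = 2 := by
  have : ⟪a, a⟫ ≠ 0 := inner_self_ne_zero.mpr ha
  unfold cInt
  field_simp

lemma cInt_refl (a b v : V) : cInt (refl b v) a = cInt v a - cInt v b * cInt b a :=
  cInt_sub_smul v b a _

lemma refl_refl {a : V} (ha : a ≠ 0) (v : V) : refl a (refl a v) = v := by
  unfold refl
  rw [cInt_sub_smul, cInt_self ha]
  module

lemma refl_neg (a v : V) : refl a (-v) = -refl a v := by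
  unfold refl
  rw [cInt_neg]
  module

lemma refl_self {a : V} (ha : a ≠ 0) : refl a a = -a := by
  unfold refl
  rw [cInt_self ha]
  module

variable (R : RootSystemBase V)

lemma refl_mem {α β : V} (hα : α ∈ R.Δ) (hβ : β ∈ R.Δ) : refl α β ∈ R.Δ :=
  R.reflect_mem α hα β hβ

lemma coeff_eq_of_eq_sum {β : V} (hβ : β ∈ R.Δ) {c : V → ℝ}
    (h : β = ∑ α ∈ R.Δ0, c α • α) {α : V} (hα : α ∈ R.Δ0) : (R.coeff β α : ℝ) = c α := by
  have hzero : ∑ γ : ↥R.Δ0, ((R.coeff β γ : ℝ) - c γ) • (γ : V) = 0 := by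
    rw [Finset.sum_coe_sort R.Δ0 (fun γ => ((R.coeff β γ : ℝ) - c γ) • γ)]
    simp only [sub_smul, Finset.sum_sub_distrib, ← h, ← R.coeff_spec β hβ, sub_self]
  have := Fintype.linearIndependent_iff.mp R.indep _ hzero ⟨α, hα⟩
  linarith

lemma coeff_neg {β : V} (hβ : β ∈ R.Δ) {α : V} (hα : α ∈ R.Δ0) :
    R.coeff (-β) α = -R.coeff β α := by
  have : (R.coeff (-β) α : ℝ) = -R.coeff β α := by
    refine R.coeff_eq_of_eq_sum (R.neg_mem β hβ) (c := fun γ => -R.coeff β γ) ?_ hα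
    conv_lhs => rw [R.coeff_spec β hβ]
    simp [neg_smul, ← Finset.sum_neg_distrib]
  exact_mod_cast this

lemma coeff_simple {a : V} (ha : a ∈ R.Δ0) {γ : V} (hγ : γ ∈ R.Δ0) :
    R.coeff a γ = if γ = a then 1 else 0 := by
  have : (R.coeff a γ : ℝ) = if γ = a then 1 else 0 := by
    refine R.coeff_eq_of_eq_sum (R.base_sub ha) (c := fun γ => if γ = a then 1 else 0) ?_ hγ
    simp [ite_smul, Finset.sum_ite_eq', ha]
  exact_mod_cast this

lemma coeff_refl {α β : V} (hα : α ∈ R.Δ) (hβ : β ∈ R.Δ) {γ : V} (hγ : γ ∈ R.Δ0) :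
    (R.coeff (refl α β) γ : ℝ) = R.coeff β γ - cInt β α * R.coeff α γ := by
  refine R.coeff_eq_of_eq_sum (R.refl_mem hα hβ)
    (c := fun γ => R.coeff β γ - cInt β α * R.coeff α γ) ?_ hγ
  simp only [sub_smul, mul_smul, Finset.sum_sub_distrib, ← Finset.smul_sum,
    ← R.coeff_spec β hβ, ← R.coeff_spec α hα]
  rfl

lemma ht_cast (Sg : Finset V) (β : V) : (R.ht Sg β : ℝ) = ∑ γ ∈ Sg, (R.coeff β γ : ℝ) := by
  simp [ht]

lemma ht_refl {Sg : Finset V} (hSg : Sg ⊆ R.Δ0) {α β : V} (hα : α ∈ R.Δ) (hβ : β ∈ R.Δ) :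
    (R.ht Sg (refl α β) : ℝ) = R.ht Sg β - cInt β α * R.ht Sg α := by
  simp only [ht_cast, Finset.mul_sum, ← Finset.sum_sub_distrib]
  exact Finset.sum_congr rfl fun γ hγ => R.coeff_refl hα hβ (hSg hγ)

lemma ht_simple {Sg : Finset V} (hSg : Sg ⊆ R.Δ0) {a : V} (ha : a ∈ R.Δ0) :
    R.ht Sg a = if a ∈ Sg then 1 else 0 := by
  unfold ht
  rw [Finset.sum_congr rfl fun γ hγ => R.coeff_simple ha (hSg hγ), Finset.sum_ite_eq']

lemma mem_of_ht_simple_pos {Sg : Finset V} (hSg : Sg ⊆ R.Δ0) {a : V} (ha : a ∈ R.Δ0)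
    (h : 0 < R.ht Sg a) : a ∈ Sg := by
  by_contra hnot
  rw [R.ht_simple hSg ha, if_neg hnot] at h
  exact lt_irrefl 0 h

lemma isPos_simple {a : V} (ha : a ∈ R.Δ0) : R.IsPos a :=
  ⟨R.base_sub ha, fun γ hγ => by rw [R.coeff_simple ha hγ]; split_ifs <;> norm_num⟩

lemma IsPos.not_isNeg {R : RootSystemBase V} {β : V} (hp : R.IsPos β) : ¬R.IsNeg β := by
  intro hn
  apply R.ne_zero β hp.1
  rw [R.coeff_spec β hp.1]
  refine Finset.sum_eq_zero fun γ hγ => ?_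
  simp [le_antisymm (hn.2 γ hγ) (hp.2 γ hγ)]

lemma IsPos.neg {R : RootSystemBase V} {β : V} (hp : R.IsPos β) : R.IsNeg (-β) :=
  ⟨R.neg_mem β hp.1, fun γ hγ => by rw [R.coeff_neg hp.1 hγ]; exact neg_nonpos.mpr (hp.2 γ hγ)⟩

lemma eq_smul_of_refl_not_isPos {a β : V} (ha : a ∈ R.Δ0) (hp : R.IsPos β)
    (hr : ¬R.IsPos (refl a β)) : β = (R.coeff β a : ℝ) • a := by
  have hmem := R.refl_mem (R.base_sub ha) hp.1
  have hneg : ∀ γ ∈ R.Δ0, R.coeff (refl a β) γ ≤ 0 :=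
    (R.coeff_sign _ hmem).resolve_left fun h => hr ⟨hmem, h⟩
  have hzero : ∀ γ ∈ R.Δ0, γ ≠ a → R.coeff β γ = 0 := by
    intro γ hγ hγa
    have h := R.coeff_refl (R.base_sub ha) hp.1 hγ
    rw [R.coeff_simple ha hγ, if_neg hγa] at h
    have : R.coeff (refl a β) γ = R.coeff β γ := by exact_mod_cast (by simpa using h)
    exact le_antisymm (this ▸ hneg γ hγ) (hp.2 γ hγ)
  conv_lhs => rw [R.coeff_spec β hp.1]
  refine Finset.sum_eq_single a (fun γ hγ hγa => by simp [hzero γ hγ hγa]) (absurd ha)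

lemma eq_one_of_smul_mem {a : V} (ha : a ∈ R.Δ) {n : ℤ} (hn : 0 < n)
    (hmem : (n : ℝ) • a ∈ R.Δ) : n = 1 := by
  have ha0 : ⟪a, a⟫ ≠ 0 := inner_self_ne_zero.mpr (R.ne_zero a ha)
  have hn0 : (n : ℝ) ≠ 0 := by exact_mod_cast hn.ne'
  obtain ⟨k, hk⟩ := R.crystal _ hmem a ha
  simp only [real_inner_smul_left, real_inner_smul_right] at hk
  have hkn : (k : ℝ) * n = 2 := by
    field_simp at hk
    have : ((k : ℝ) * n) * (n * ⟪a, a⟫) = 2 * (n * ⟪a, a⟫) := by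
      linear_combination -((n : ℝ) * ⟪a, a⟫) * hk
    exact mul_right_cancel₀ (mul_ne_zero hn0 ha0) this
  have hle : n ≤ 2 := Int.le_of_dvd two_pos (Dvd.intro_left k (by exact_mod_cast hkn))
  have hn2 : n ≠ 2 := by
    rintro rfl
    exact R.reduced a ha (by exact_mod_cast hmem)
  omega

lemma isPos_refl {a β : V} (ha : a ∈ R.Δ0) (hp : R.IsPos β) (hβa : β ≠ a) :
    R.IsPos (refl a β) := by
  by_contra hr
  have hβ := R.eq_smul_of_refl_not_isPos ha hp hr
  have hn : 0 < R.coeff β a := by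
    refine lt_of_le_of_ne (hp.2 a ha) fun h => R.ne_zero β hp.1 ?_
    rw [hβ, ← h]
    simp
  have h1 := R.eq_one_of_smul_mem (R.base_sub ha) hn (hβ ▸ hp.1)
  exact hβa (by rw [hβ, h1]; simp)

theorem Dsig_eq {a b : V} (ha : a ∈ R.Δ0) (hb : b ∈ R.Δ0) (hab : a ≠ b) :
    R.Dsig a b = {a, refl a b} := by
  have ha0 := R.ne_zero a (R.base_sub ha)
  have hb0 := R.ne_zero b (R.base_sub hb)
  ext β
  simp only [Dsig, Finset.mem_filter, Finset.mem_insert, Finset.mem_singleton]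
  constructor
  · rintro ⟨hβ, hpos, hneg⟩
    by_cases hβa : β = a
    · exact Or.inl hβa
    have hra := R.isPos_refl ha hpos hβa
    by_cases hrb : refl a β = b
    · exact Or.inr (by rw [← hrb, refl_refl ha0])
    · exact absurd hneg (R.isPos_refl hb hra hrb).not_isNeg
  · rintro (rfl | rfl)
    · refine ⟨R.base_sub ha, R.isPos_simple ha, ?_⟩
      rw [refl_self ha0, refl_neg]
      exact (R.isPos_refl hb (R.isPos_simple ha) hab).neg
    · have hpos := R.isPos_refl ha (R.isPos_simple hb) (Ne.symm hab)
      refine ⟨hpos.1, hpos, ?_⟩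
      rw [refl_refl ha0, refl_self hb0]
      exact (R.isPos_simple hb).neg

end RootSystemBase

theorem statement12_general {V : Type*} [NormedAddCommGroup V] [InnerProductSpace ℝ V]
    (R : RootSystemBase V)
    (Sg : Finset V) (hSg : Sg ⊆ R.Δ0)
    (θ : V) (hθ : R.IsHighest θ)
    (a b : V) (ha : a ∈ R.Δ0) (hb : b ∈ R.Δ0) (hab : a ≠ b)
    (hW : ∀ β ∈ R.Dsig a b, 0 < R.ht Sg β) :
    R.Dsig a b = ({a, RootSystemBase.refl a b} : Finset V) ∧
    a ∈ Sg ∧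
    (-(R.ht Sg (RootSystemBase.refl a (RootSystemBase.refl b θ)) : ℝ)
        + (R.ht Sg a : ℝ) + (R.ht Sg (RootSystemBase.refl a b) : ℝ) =
      -(R.ht Sg θ : ℝ) + RootSystemBase.cInt θ a + 1 +
        (RootSystemBase.cInt θ b + 1) * (R.ht Sg (RootSystemBase.refl a b) : ℝ)) := by
  have hDsig := R.Dsig_eq ha hb hab
  have haSg : a ∈ Sg :=
    R.mem_of_ht_simple_pos hSg ha (hW a (hDsig ▸ Finset.mem_insert_self _ _))
  have hht_a : (R.ht Sg a : ℝ) = 1 := by simp [R.ht_simple hSg ha, haSg]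
  refine ⟨hDsig, haSg, ?_⟩
  have haD := R.base_sub ha
  have hbD := R.base_sub hb
  rw [R.ht_refl hSg haD (R.refl_mem hbD hθ.1), R.ht_refl hSg hbD hθ.1,
    R.ht_refl hSg haD hbD, RootSystemBase.cInt_refl, hht_a]
  ring

/-- Let `Δ` be an irreducible root system with base
`Δ⁰`, highest root `θ`, and let `Σ ⊆ Δ⁰` be nonempty.  Suppose `σ = s_a ∘ s_b`
(`a ≠ b` simple) satisfies `Δ_σ ⊆ Δ⁺_Σ` (i.e. `σ ∈ W²_Σ`).  Then
(a) `Δ_σ = {a, s_a(b)}`; (b) `a ∈ Σ`; and (c) the homogeneity weight formula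
`-ht_Σ(σ(θ)) + ht_Σ(a) + ht_Σ(s_a(b)) = -ht_Σ(θ) + ⟨θ,a⟩ + 1 + (⟨θ,b⟩+1)·ht_Σ(s_a(b))`
holds. -/
theorem statement12 {V : Type*} [NormedAddCommGroup V] [InnerProductSpace ℝ V]
    (R : RootSystemBase V) (hirr : R.Irred)
    (Sg : Finset V) (hSg : Sg ⊆ R.Δ0) (hne : Sg.Nonempty)
    (θ : V) (hθ : R.IsHighest θ)
    (a b : V) (ha : a ∈ R.Δ0) (hb : b ∈ R.Δ0) (hab : a ≠ b)
    (hW : ∀ β ∈ R.Dsig a b, 0 < R.ht Sg β) :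
    R.Dsig a b = ({a, RootSystemBase.refl a b} : Finset V) ∧
    a ∈ Sg ∧
    (-(R.ht Sg (RootSystemBase.refl a (RootSystemBase.refl b θ)) : ℝ)
        + (R.ht Sg a : ℝ) + (R.ht Sg (RootSystemBase.refl a b) : ℝ) =
      -(R.ht Sg θ : ℝ) + RootSystemBase.cInt θ a + 1 +
        (RootSystemBase.cInt θ b + 1) * (R.ht Sg (RootSystemBase.refl a b) : ℝ)) :=
  statement12_general R Sg hSg θ hθ a b ha hb hab hW
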